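/- The following hold: (i) max(√(ξ·s_n²/n) − M·ξ/n, 0) ≤ max_{w ∈ K} Σᵢ wᵢ·zᵢ − z̄ ≤ √(ξ·s_n²/n); and (ii) if in addition s_n² ≥ ξ·M²/n, then max_{w ∈ K} Σᵢ wᵢ·zᵢ = z̄ + √(ξ·s_n²/n). -/

import Mathlib

/-!
Writing `w = 1/n + d`, the constraint on `w ∈ K` says `∑ dᵢ = 0` and `‖d‖² ≤ ξ/n²`, and then
`∑ wᵢ zᵢ - z̄ = ∑ dᵢ (zᵢ - z̄)`. By Cauchy–Schwarz this is at most `‖d‖ · √(n s_n²) ≤ √(ξ s_n²/n)`,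
with equality for `d` proportional to `z - z̄`. That extremal `d` keeps `w` nonnegative exactly when
`s_n² ≥ ξ M²/n`; otherwise `√(ξ s_n²/n) ≤ M ξ/n` and the uniform weights already give the lower bound.
-/

open Finset Fintype

namespace ChiSqBall

variable {ι : Type*} [Fintype ι]

noncomputable def mean (z : ι → ℝ) : ℝ := 1 / (card ι : ℝ) * ∑ i, z i

noncomputable def sampleVariance (z : ι → ℝ) : ℝ := 1 / (card ι : ℝ) * ∑ i, z i ^ 2 - mean z ^ 2

variable (ι) in
noncomputable def chiSqBall (ξ : ℝ) : Set (ι → ℝ) :=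
  {w | (∀ i, 0 ≤ w i) ∧ ∑ i, w i = 1 ∧
    1 / (card ι : ℝ) * ∑ i, ((card ι : ℝ) * w i - 1) ^ 2 ≤ ξ / card ι}

noncomputable def chiSqSup (ξ : ℝ) (z : ι → ℝ) : ℝ :=
  sSup ((fun w => ∑ i, w i * z i) '' chiSqBall ι ξ)

noncomputable def tilt (z : ι → ℝ) (t : ℝ) : ι → ℝ := fun i => 1 / card ι + t * (z i - mean z)

section Nonempty

variable [Nonempty ι]

lemma card_pos_real : (0 : ℝ) < card ι := by exact_mod_cast Fintype.card_pos

lemma sum_eq_card_mul_mean (z : ι → ℝ) : ∑ i, z i = card ι * mean z := by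
  have := (card_pos_real (ι := ι)).ne'
  simp only [mean]
  field_simp

lemma mean_le_of_le {z : ι → ℝ} {M : ℝ} (hz : ∀ i, z i ≤ M) : mean z ≤ M := by
  have hsum : ∑ i, z i ≤ card ι * M := by simpa using sum_le_sum fun i (_ : i ∈ univ) => hz i
  rw [sum_eq_card_mul_mean] at hsum
  exact le_of_mul_le_mul_left hsum card_pos_real

lemma sum_sub_mean_sq (z : ι → ℝ) :
    ∑ i, (z i - mean z) ^ 2 = card ι * sampleVariance z := by
  have := (card_pos_real (ι := ι)).ne'
  simp only [sub_sq, sum_add_distrib, sum_sub_distrib, ← sum_mul, ← mul_sum, sum_const,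
    card_univ, nsmul_eq_mul, sampleVariance, sum_eq_card_mul_mean z]
  field_simp
  ring

lemma sampleVariance_nonneg (z : ι → ℝ) : 0 ≤ sampleVariance z := by
  have h := sum_sub_mean_sq z
  have : 0 ≤ ∑ i, (z i - mean z) ^ 2 := sum_nonneg fun i _ => sq_nonneg _
  exact nonneg_of_mul_nonneg_right (h ▸ this) card_pos_real

lemma sum_mul_sub_mean {w : ι → ℝ} (hw : ∑ i, w i = 1) (z : ι → ℝ) :
    ∑ i, w i * z i - mean z = ∑ i, (w i - 1 / card ι) * (z i - mean z) := by
  have := (card_pos_real (ι := ι)).ne'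
  simp only [sub_mul, mul_sub, sum_sub_distrib, ← sum_mul, ← mul_sum, sum_const, card_univ,
    nsmul_eq_mul, hw, sum_eq_card_mul_mean z]
  field_simp
  ring

lemma mem_chiSqBall_iff {ξ : ℝ} {w : ι → ℝ} :
    w ∈ chiSqBall ι ξ ↔
      (∀ i, 0 ≤ w i) ∧ ∑ i, w i = 1 ∧ ∑ i, (w i - 1 / card ι) ^ 2 ≤ ξ / card ι ^ 2 := by
  have hN := card_pos_real (ι := ι)
  have hdiv : 1 / (card ι : ℝ) * ∑ i, ((card ι : ℝ) * w i - 1) ^ 2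
      = card ι * ∑ i, (w i - 1 / card ι) ^ 2 := by
    rw [mul_sum, mul_sum]
    refine sum_congr rfl fun i _ => ?_
    field_simp
  rw [chiSqBall, Set.mem_ofPred_eq, hdiv, ← le_div_iff₀' hN, div_div, ← sq]

lemma sum_mul_le_mean_add_sqrt {ξ : ℝ} {w : ι → ℝ} (hw : w ∈ chiSqBall ι ξ) (z : ι → ℝ) :
    ∑ i, w i * z i ≤ mean z + √(ξ * sampleVariance z / card ι) := by
  obtain ⟨-, hsum, hdev⟩ := mem_chiSqBall_iff.1 hw
  calc ∑ i, w i * z i = mean z + ∑ i, (w i - 1 / card ι) * (z i - mean z) := by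
        rw [← sum_mul_sub_mean hsum]; ring
    _ ≤ mean z + √(∑ i, (w i - 1 / card ι) ^ 2) * √(∑ i, (z i - mean z) ^ 2) := by
        gcongr; exact Real.sum_mul_le_sqrt_mul_sqrt _ _ _
    _ ≤ mean z + √(ξ / card ι ^ 2) * √(card ι * sampleVariance z) := by
        rw [sum_sub_mean_sq]; gcongr
    _ = mean z + √(ξ * sampleVariance z / card ι) := by
        rw [← Real.sqrt_mul' _ (by have := sampleVariance_nonneg z; positivity)]
        congr 2
        field_simp

lemma sum_tilt (z : ι → ℝ) (t : ℝ) : ∑ i, tilt z t i = 1 := by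
  have := (card_pos_real (ι := ι)).ne'
  simp only [tilt, sum_add_distrib, ← mul_sum, sum_sub_distrib, sum_const, card_univ,
    nsmul_eq_mul, sum_eq_card_mul_mean z]
  field_simp
  ring

lemma sum_tilt_mul (z : ι → ℝ) (t : ℝ) :
    ∑ i, tilt z t i * z i = mean z + t * (card ι * sampleVariance z) := by
  rw [← sub_eq_iff_eq_add', sum_mul_sub_mean (sum_tilt z t), ← sum_sub_mean_sq, mul_sum]
  refine sum_congr rfl fun i _ => ?_
  simp only [tilt]
  ring

lemma tilt_mem_chiSqBall {z : ι → ℝ} {M ξ t : ℝ} (hz : ∀ i, z i ∈ Set.Icc 0 M) (ht : 0 ≤ t)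
    (htM : t * M ≤ 1 / card ι) (hdev : t ^ 2 * (card ι * sampleVariance z) ≤ ξ / card ι ^ 2) :
    tilt z t ∈ chiSqBall ι ξ := by
  refine mem_chiSqBall_iff.2 ⟨fun i => ?_, sum_tilt z t, ?_⟩
  · have hmean : mean z - z i ≤ M := by
      linarith [mean_le_of_le fun j => (hz j).2, (hz i).1]
    have := mul_le_mul_of_nonneg_left hmean ht
    simp only [tilt]
    linarith
  · rw [← sum_sub_mean_sq, mul_sum] at hdev
    simpa only [tilt, add_sub_cancel_left, mul_pow] using hdev

lemma uniform_mem_chiSqBall {ξ : ℝ} (hξ : 0 ≤ ξ) :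
    (fun _ : ι => 1 / (card ι : ℝ)) ∈ chiSqBall ι ξ := by
  have := (card_pos_real (ι := ι)).ne'
  refine mem_chiSqBall_iff.2 ⟨fun _ => by positivity, ?_, ?_⟩
  · simp only [sum_const, card_univ, nsmul_eq_mul]
    field_simp
  · simp only [sub_self, zero_pow two_ne_zero, sum_const_zero]
    positivity

lemma bddAbove_image_chiSqBall (ξ : ℝ) (z : ι → ℝ) :
    BddAbove ((fun w => ∑ i, w i * z i) '' chiSqBall ι ξ) := by
  refine ⟨mean z + √(ξ * sampleVariance z / card ι), ?_⟩
  rintro _ ⟨w, hw, rfl⟩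
  exact sum_mul_le_mean_add_sqrt hw z

lemma sum_mul_le_chiSqSup {ξ : ℝ} {w : ι → ℝ} (hw : w ∈ chiSqBall ι ξ) (z : ι → ℝ) :
    ∑ i, w i * z i ≤ chiSqSup ξ z :=
  le_csSup (bddAbove_image_chiSqBall ξ z) ⟨w, hw, rfl⟩

lemma mean_le_chiSqSup {ξ : ℝ} (hξ : 0 ≤ ξ) (z : ι → ℝ) : mean z ≤ chiSqSup ξ z := by
  have h := sum_mul_le_chiSqSup (uniform_mem_chiSqBall hξ) z
  rwa [← mul_sum] at h

lemma chiSqSup_le {ξ : ℝ} (hξ : 0 ≤ ξ) (z : ι → ℝ) :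
    chiSqSup ξ z ≤ mean z + √(ξ * sampleVariance z / card ι) := by
  refine csSup_le ⟨_, _, uniform_mem_chiSqBall hξ, rfl⟩ ?_
  rintro _ ⟨w, hw, rfl⟩
  exact sum_mul_le_mean_add_sqrt hw z

/-- The tilt `t = √(ξ s²/n) / (n s²)` makes the Cauchy–Schwarz bound tight; it stays in the
simplex as long as `t M ≤ 1/n`, i.e. `ξ M²/n ≤ s²`. -/
lemma chiSqSup_eq {z : ι → ℝ} {M ξ : ℝ} (hξ : 0 ≤ ξ) (hz : ∀ i, z i ∈ Set.Icc 0 M)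
    (hvar : ξ * M ^ 2 / card ι ≤ sampleVariance z) :
    chiSqSup ξ z = mean z + √(ξ * sampleVariance z / card ι) := by
  set s := sampleVariance z
  set r := √(ξ * s / card ι)
  have hN := card_pos_real (ι := ι)
  refine (chiSqSup_le hξ z).antisymm ?_
  rcases (sampleVariance_nonneg z).eq_or_lt with hs | hs
  · simpa [r, ← hs] using mean_le_chiSqSup hξ z
  have hs0 : s ≠ 0 := hs.ne'
  set t := r / (card ι * s)
  have hr2 : r ^ 2 = ξ * s / card ι := Real.sq_sqrt (by positivity)
  have hrM : r * M ≤ s := by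
    have hsq : (r * M) ^ 2 ≤ s ^ 2 := by
      calc (r * M) ^ 2 = s * (ξ * M ^ 2 / card ι) := by rw [mul_pow, hr2]; ring
        _ ≤ s * s := by gcongr
        _ = s ^ 2 := by ring
    exact le_of_sq_le_sq hsq hs.le
  have htM : t * M ≤ 1 / card ι := by
    rw [div_mul_eq_mul_div, div_le_div_iff₀ (by positivity) hN]
    nlinarith
  have hdev : t ^ 2 * (card ι * s) = ξ / card ι ^ 2 := by
    simp only [t]
    rw [div_pow, hr2]
    field_simp
  have hval : t * (card ι * s) = r := by
    simp only [t]
    field_simp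
  have := sum_mul_le_chiSqSup (tilt_mem_chiSqBall hz (by positivity) htM hdev.le) z
  rwa [sum_tilt_mul, hval] at this

lemma sqrt_sub_le_chiSqSup_sub_mean {z : ι → ℝ} {M ξ : ℝ} (hξ : 0 ≤ ξ)
    (hz : ∀ i, z i ∈ Set.Icc 0 M) :
    √(ξ * sampleVariance z / card ι) - M * ξ / card ι ≤ chiSqSup ξ z - mean z := by
  have hM : 0 ≤ M := (hz (Classical.arbitrary ι)).1.trans (hz _).2
  by_cases hvar : ξ * M ^ 2 / card ι ≤ sampleVariance z
  · rw [chiSqSup_eq hξ hz hvar]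
    have : 0 ≤ M * ξ / card ι := by positivity
    linarith
  · have hsqrt : √(ξ * sampleVariance z / card ι) ≤ M * ξ / card ι := by
      refine Real.sqrt_le_iff.2 ⟨by positivity, ?_⟩
      calc ξ * sampleVariance z / card ι ≤ ξ * (ξ * M ^ 2 / card ι) / card ι := by
            gcongr; exact (not_le.1 hvar).le
        _ = (M * ξ / card ι) ^ 2 := by ring
    linarith [mean_le_chiSqSup hξ z]

end Nonempty

end ChiSqBall

open ChiSqBall

theorem stmt_14_general (n : ℕ) (hn : 1 ≤ n) (M ξ : ℝ) (hξ : 0 ≤ ξ)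
    (z : Fin n → ℝ) (hz : ∀ i, z i ∈ Set.Icc (0 : ℝ) M) :
    let zbar : ℝ := (1 / (n : ℝ)) * ∑ i, z i
    let s2 : ℝ := (1 / (n : ℝ)) * ∑ i, (z i) ^ 2 - zbar ^ 2
    let K : Set (Fin n → ℝ) := {w | (∀ i, 0 ≤ w i) ∧ ∑ i, w i = 1 ∧
      (1 / (n : ℝ)) * ∑ i, ((n : ℝ) * w i - 1) ^ 2 ≤ ξ / n}
    let m : ℝ := sSup {x : ℝ | ∃ w ∈ K, x = ∑ i, w i * z i}
    (max (Real.sqrt (ξ * s2 / n) - M * ξ / n) 0 ≤ m - zbar ∧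
      m - zbar ≤ Real.sqrt (ξ * s2 / n)) ∧
    (ξ * M ^ 2 / n ≤ s2 → m = zbar + Real.sqrt (ξ * s2 / n)) := by
  intro zbar s2 K m
  have : Nonempty (Fin n) := ⟨⟨0, hn⟩⟩
  have hzbar : zbar = mean z := by simp only [zbar, mean, Fintype.card_fin]
  have hs2 : s2 = sampleVariance z := by
    simp only [s2, hzbar, sampleVariance, Fintype.card_fin]
  have hm : m = chiSqSup ξ z := by
    simp only [m, K, chiSqSup, chiSqBall, Fintype.card_fin, Set.image, eq_comm]
  have hcard : (n : ℝ) = card (Fin n) := by simp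
  rw [hm, hzbar, hs2, hcard]
  refine ⟨⟨max_le ?_ ?_, ?_⟩, chiSqSup_eq hξ hz⟩
  · exact sqrt_sub_le_chiSqSup_sub_mean hξ hz
  · exact sub_nonneg.2 (mean_le_chiSqSup hξ z)
  · exact sub_le_iff_le_add'.2 (chiSqSup_le hξ z)

/-- variance representation of the upper confidence bound over the
χ²-divergence ball `K` around the uniform distribution. -/
theorem stmt_14 (n : ℕ) (hn : 1 ≤ n) (M ξ : ℝ) (hM : 0 < M) (hξ : 0 ≤ ξ)
    (z : Fin n → ℝ) (hz : ∀ i, z i ∈ Set.Icc (0 : ℝ) M) :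
    let zbar : ℝ := (1 / (n : ℝ)) * ∑ i, z i
    let s2 : ℝ := (1 / (n : ℝ)) * ∑ i, (z i) ^ 2 - zbar ^ 2
    let K : Set (Fin n → ℝ) := {w | (∀ i, 0 ≤ w i) ∧ ∑ i, w i = 1 ∧
      (1 / (n : ℝ)) * ∑ i, ((n : ℝ) * w i - 1) ^ 2 ≤ ξ / n}
    let m : ℝ := sSup {x : ℝ | ∃ w ∈ K, x = ∑ i, w i * z i}
    (max (Real.sqrt (ξ * s2 / n) - M * ξ / n) 0 ≤ m - zbar ∧
      m - zbar ≤ Real.sqrt (ξ * s2 / n)) ∧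
    (ξ * M ^ 2 / n ≤ s2 → m = zbar + Real.sqrt (ξ * s2 / n)) :=
  stmt_14_general n hn M ξ hξ z hz
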